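/- arXiv:1011.2747 — 2 statements merged into one kernel-verified Lean document; each statement's English description precedes it below -/
import Mathlib

section
/- Let c ∈ ℝ and set p = s(1−p_A) + (1−p_J) k r. For all bounded functions u₁, u₂ : ℝ → [0,∞), the sup-norm estimate sup_{x∈ℝ} |B_c[u₁](x) − B_c[u₂](x)| ≤ p · sup_{x∈ℝ} |u₁(x) − u₂(x)| holds; in particular, under condition (b2) the operator B_c is a strict contraction in the sup norm on bounded nonnegative functions. -/
open MeasureTheory Filter Topology

/-! The difference quotient of the Beverton–Holt map `u ↦ a M u / (M + b u)` at `x, y ≥ 0` is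
`a M² / ((M + b x)(M + b y)) ≤ a`, so the map is `a`-Lipschitz on `[0, ∞)`. Pointwise, `B_c` is a
nonnegative combination of the identity and this map evaluated at `u (x + c)`, so it is Lipschitz in
the sup norm with constant `s (1 - p_A) + (1 - p_J) k r`. -/

theorem abs_bevertonHolt_sub_le {a M b x y : ℝ} (ha : 0 ≤ a) (hM : 0 < M) (hb : 0 ≤ b)
    (hx : 0 ≤ x) (hy : 0 ≤ y) :
    |a * M * x / (M + b * x) - a * M * y / (M + b * y)| ≤ a * |x - y| := by
  have hDx : 0 < M + b * x := by positivity
  have hDy : 0 < M + b * y := by positivity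
  have hD : M ^ 2 ≤ (M + b * x) * (M + b * y) := by
    nlinarith [mul_nonneg hM.le (mul_nonneg hb hx), mul_nonneg hM.le (mul_nonneg hb hy),
      mul_nonneg (mul_nonneg hb hb) (mul_nonneg hx hy)]
  have hdiff : a * M * x / (M + b * x) - a * M * y / (M + b * y)
      = a * M ^ 2 * (x - y) / ((M + b * x) * (M + b * y)) := by
    field_simp
    ring
  rw [hdiff, abs_div, abs_mul, abs_of_nonneg (by positivity : 0 ≤ a * M ^ 2),
    abs_of_pos (mul_pos hDx hDy), div_le_iff₀ (mul_pos hDx hDy), mul_right_comm]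
  exact mul_le_mul_of_nonneg_left hD (by positivity)

theorem abs_mul_add_mul_sub_le {f : ℝ → ℝ} {L α β x y : ℝ}
    (hα : 0 ≤ α) (hβ : 0 ≤ β) (hf : |f x - f y| ≤ L * |x - y|) :
    |(α * x + β * f x) - (α * y + β * f y)| ≤ (α + β * L) * |x - y| :=
  calc |(α * x + β * f x) - (α * y + β * f y)|
      = |α * (x - y) + β * (f x - f y)| := by ring_nf
    _ ≤ α * |x - y| + β * |f x - f y| := by
      simpa only [abs_mul, abs_of_nonneg hα, abs_of_nonneg hβ] using
        abs_add_le (α * (x - y)) (β * (f x - f y))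
    _ ≤ α * |x - y| + β * (L * |x - y|) := by gcongr
    _ = (α + β * L) * |x - y| := by ring

theorem stmt8_general
    (r M k s : ℝ) (hr : 1 < r) (hM : 0 < M) (hk : 0 < k) (hs : 0 ≤ s)
    (F : ℝ → ℝ) (hF : ∀ u : ℝ, F u = k * r * M * u / (M + (r - 1) * u))
    (pA pJ : ℝ) (hpA : pA ∈ Set.Icc (0:ℝ) 1) (hpJ : pJ ∈ Set.Icc (0:ℝ) 1)
    (c : ℝ)
    (Bc : (ℝ → ℝ) → ℝ → ℝ)
    (hBc : ∀ (u : ℝ → ℝ) (x : ℝ), Bc u x =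
      s * (1 - pA) * u (x + c) + (1 - pJ) * F (u (x + c)))
    (p : ℝ) (hp : p = s * (1 - pA) + (1 - pJ) * k * r)
    (u₁ u₂ : ℝ → ℝ)
    (h₁nn : ∀ x, 0 ≤ u₁ x) (h₂nn : ∀ x, 0 ≤ u₂ x) :
    ∀ C : ℝ, (∀ x, |u₁ x - u₂ x| ≤ C) → ∀ x, |Bc u₁ x - Bc u₂ x| ≤ p * C := by
  intro C hC x
  have hkr : 0 ≤ k * r := by positivity
  have hαA : 0 ≤ s * (1 - pA) := mul_nonneg hs (by linarith [hpA.2])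
  have hβJ : 0 ≤ 1 - pJ := by linarith [hpJ.2]
  have hF_lip : |F (u₁ (x + c)) - F (u₂ (x + c))| ≤ k * r * |u₁ (x + c) - u₂ (x + c)| := by
    rw [hF, hF]
    exact abs_bevertonHolt_sub_le hkr hM (by linarith) (h₁nn _) (h₂nn _)
  have hp_eq : p = s * (1 - pA) + (1 - pJ) * (k * r) := by rw [hp, mul_assoc]
  rw [hBc, hBc]
  calc _ ≤ p * |u₁ (x + c) - u₂ (x + c)| :=
        hp_eq ▸ abs_mul_add_mul_sub_le hαA hβJ hF_lip
    _ ≤ p * C := by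
        gcongr
        · rw [hp_eq]; positivity
        · exact hC _

theorem stmt8
    (r M k s : ℝ) (hr : 1 < r) (hM : 0 < M) (hk : 0 < k) (hs : 0 ≤ s) (hsk : s + k = 1)
    (F : ℝ → ℝ) (hF : ∀ u : ℝ, F u = k * r * M * u / (M + (r - 1) * u))
    (pA pJ : ℝ) (hpA : pA ∈ Set.Icc (0:ℝ) 1) (hpJ : pJ ∈ Set.Icc (0:ℝ) 1)
    (c : ℝ)
    (Bc : (ℝ → ℝ) → ℝ → ℝ)
    (hBc : ∀ (u : ℝ → ℝ) (x : ℝ), Bc u x =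
      s * (1 - pA) * u (x + c) + (1 - pJ) * F (u (x + c)))
    (p : ℝ) (hp : p = s * (1 - pA) + (1 - pJ) * k * r)
    (u₁ u₂ : ℝ → ℝ)
    (h₁nn : ∀ x, 0 ≤ u₁ x) (h₂nn : ∀ x, 0 ≤ u₂ x)
    (h₁b : ∃ C : ℝ, ∀ x, u₁ x ≤ C) (h₂b : ∃ C : ℝ, ∀ x, u₂ x ≤ C) :
    ∀ C : ℝ, (∀ x, |u₁ x - u₂ x| ≤ C) → ∀ x, |Bc u₁ x - Bc u₂ x| ≤ p * C :=
  stmt8_general r M k s hr hM hk hs F hF pA pJ hpA hpJ c Bc hBc p hp u₁ u₂ h₁nn h₂nn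
end

section
/- Assume condition (b2): s(1−p_A) + (1−p_J) k r < 1, and let c ∈ ℝ. Then for every bounded measurable function w : ℝ → [0,∞) there exists a unique bounded measurable function u : ℝ → [0,∞) such that u(x) − B_c[u](x) = w(x) for all x ∈ ℝ; moreover, if w is continuous then this unique solution u is continuous. -/
open MeasureTheory Filter Topology

/-!
With `g t = s(1-p_A) t + (1-p_J) F t`, the equation reads `u = g ∘ u(· + c) + w`. The
Beverton–Holt map `F` is `k r`-Lipschitz on `[0, ∞)`, so `g` is Lipschitz there with constant
`L = s(1-p_A) + (1-p_J) k r`, and `L < 1` is exactly (b2). Truncating `g` at `0` (which changes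
nothing on nonnegative functions) makes `u ↦ g ∘ u(· + c) + w` a contraction of the Banach space
`ℓ^∞(ℝ, ℝ)` of bounded functions. Its fixed point is nonnegative because `g ≥ 0` and `w ≥ 0`, and it
is measurable (continuous if `w` is) because these functions form closed invariant subsets of
`ℓ^∞(ℝ, ℝ)`.
-/

open scoped NNReal ENNReal lp

theorem ContractingWith.fixedPoint_mem_of_isClosed {α : Type*} [MetricSpace α] [Nonempty α]
    [CompleteSpace α] {K : ℝ≥0} {f : α → α} (hf : ContractingWith K f) {s : Set α}
    (hs : IsClosed s) (hfs : Set.MapsTo f s s) {x : α} (hx : x ∈ s) : fixedPoint f hf ∈ s :=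
  hs.mem_of_tendsto (hf.tendsto_iterate_fixedPoint x) (.of_forall fun n => hfs.iterate n hx)

namespace lp

variable {ι E : Type*} [NormedAddCommGroup E]

theorem tendstoUniformly_coe_of_tendsto {α : Type*} {l : Filter α} {F : α → ℓ^∞(ι, E)}
    {f : ℓ^∞(ι, E)} (h : Tendsto F l (𝓝 f)) : TendstoUniformly (fun n i => F n i) f l := by
  rw [Metric.tendstoUniformly_iff]
  intro ε hε
  filter_upwards [Metric.tendsto_nhds.1 h ε hε] with n hn i
  have hi := (lipschitzWith_one_eval ∞ i).dist_le_mul (F n) f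
  rw [NNReal.coe_one, one_mul] at hi
  exact dist_comm (F n i) (f i) ▸ hi.trans_lt hn

theorem isClosed_setOf_continuous [TopologicalSpace ι] :
    IsClosed {u : ℓ^∞(ι, E) | Continuous u} :=
  IsSeqClosed.isClosed fun _ _ hF hlim =>
    (tendstoUniformly_coe_of_tendsto hlim).continuous (.of_forall hF)

theorem isClosed_setOf_measurable [MeasurableSpace ι] [MeasurableSpace E] [BorelSpace E] :
    IsClosed {u : ℓ^∞(ι, E) | Measurable u} :=
  IsSeqClosed.isClosed fun _ _ hF hlim =>
    measurable_of_tendsto_metrizable' atTop hF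
      (uniformContinuous_coe.continuous.tendsto _ |>.comp hlim)

variable {K : ℝ≥0} {g : ℝ → ℝ}

theorem _root_.LipschitzWith.memℓp_infty_comp (hg : LipschitzWith K g) (τ : ι → ι)
    (u : ℓ^∞(ι, ℝ)) : Memℓp (fun i => g (u (τ i))) ∞ := by
  refine memℓp_infty ⟨‖g 0‖ + K * ‖u‖, ?_⟩
  rintro _ ⟨i, rfl⟩
  have hu := norm_apply_le_norm ENNReal.top_ne_zero u (τ i)
  have hgu := hg.dist_le_mul (u (τ i)) 0
  rw [dist_zero_right, dist_eq_norm] at hgu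
  calc ‖g (u (τ i))‖ ≤ ‖g 0‖ + ‖g (u (τ i)) - g 0‖ := norm_le_insert' _ _
    _ ≤ ‖g 0‖ + K * ‖u‖ := by gcongr; exact hgu.trans (by gcongr)

noncomputable def compShiftAdd (hg : LipschitzWith K g) (τ : ι → ι) (w u : ℓ^∞(ι, ℝ)) :
    ℓ^∞(ι, ℝ) :=
  ⟨fun i => g (u (τ i)) + w i, (hg.memℓp_infty_comp τ u).add (lp.memℓp w)⟩

theorem contractingWith_compShiftAdd (hg : LipschitzWith K g) (hK : K < 1) (τ : ι → ι)
    (w : ℓ^∞(ι, ℝ)) : ContractingWith K (compShiftAdd hg τ w) := by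
  refine ⟨hK, LipschitzWith.of_dist_le_mul fun u v => ?_⟩
  rw [dist_eq_norm, dist_eq_norm]
  refine norm_le_of_forall_le (by positivity) fun i => ?_
  calc ‖(compShiftAdd hg τ w u - compShiftAdd hg τ w v) i‖
      = dist (g (u (τ i))) (g (v (τ i))) := by
        rw [coeFn_sub, Pi.sub_apply, ← dist_eq_norm]
        exact dist_add_right _ _ _
    _ ≤ K * dist (u (τ i)) (v (τ i)) := hg.dist_le_mul _ _
    _ ≤ K * ‖u - v‖ := by
      gcongr
      simpa [dist_eq_norm] using norm_apply_le_norm ENNReal.top_ne_zero (u - v) (τ i)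

theorem isFixedPt_compShiftAdd_iff (hg : LipschitzWith K g) (τ : ι → ι) (w u : ℓ^∞(ι, ℝ)) :
    Function.IsFixedPt (compShiftAdd hg τ w) u ↔ ∀ i, u i = g (u (τ i)) + w i := by
  rw [Function.IsFixedPt, lp.ext_iff, funext_iff]
  exact forall_congr' fun _ => eq_comm

noncomputable def boundedSolution (hg : LipschitzWith K g) (hK : K < 1) (τ : ι → ι)
    (w : ℓ^∞(ι, ℝ)) : ℓ^∞(ι, ℝ) :=
  ContractingWith.fixedPoint _ (contractingWith_compShiftAdd hg hK τ w)

variable (hg : LipschitzWith K g) (hK : K < 1) (τ : ι → ι) (w : ℓ^∞(ι, ℝ))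

theorem boundedSolution_apply (i : ι) :
    boundedSolution hg hK τ w i = g (boundedSolution hg hK τ w (τ i)) + w i :=
  (isFixedPt_compShiftAdd_iff hg τ w _).1 (ContractingWith.fixedPoint_isFixedPt _) i

theorem eq_boundedSolution {v : ℓ^∞(ι, ℝ)} (hv : ∀ i, v i = g (v (τ i)) + w i) :
    v = boundedSolution hg hK τ w :=
  (contractingWith_compShiftAdd hg hK τ w).fixedPoint_unique
    ((isFixedPt_compShiftAdd_iff hg τ w v).2 hv)

theorem measurable_boundedSolution [MeasurableSpace ι] (hτ : Measurable τ)
    (hw : Measurable w) : Measurable (boundedSolution hg hK τ w) :=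
  (contractingWith_compShiftAdd hg hK τ w).fixedPoint_mem_of_isClosed isClosed_setOf_measurable
    (fun u hu => show Measurable fun i => g (u (τ i)) + w i from
      (hg.continuous.measurable.comp (hu.comp hτ)).add hw) (x := 0) measurable_const

theorem continuous_boundedSolution [TopologicalSpace ι] (hτ : Continuous τ)
    (hw : Continuous w) : Continuous (boundedSolution hg hK τ w) :=
  (contractingWith_compShiftAdd hg hK τ w).fixedPoint_mem_of_isClosed isClosed_setOf_continuous
    (fun u hu => show Continuous fun i => g (u (τ i)) + w i from
      (hg.continuous.comp (hu.comp hτ)).add hw) (x := 0) continuous_const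

end lp

theorem memℓp_infty_of_nonneg_of_le {ι : Type*} {f : ι → ℝ} {C : ℝ} (hf₀ : ∀ i, 0 ≤ f i)
    (hfC : ∀ i, f i ≤ C) : Memℓp f ∞ :=
  memℓp_infty ⟨C, by rintro _ ⟨i, rfl⟩; exact (Real.norm_of_nonneg (hf₀ i)).trans_le (hfC i)⟩

noncomputable def bevertonHolt (A M q t : ℝ) : ℝ := A * M * t / (M + q * t)

noncomputable def growthMap (a b A M q t : ℝ) : ℝ :=
  a * max t 0 + b * bevertonHolt A M q (max t 0)

section BevertonHolt

variable {A M q : ℝ}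

theorem bevertonHolt_nonneg (hA : 0 ≤ A) (hM : 0 < M) (hq : 0 ≤ q) {t : ℝ} (ht : 0 ≤ t) :
    0 ≤ bevertonHolt A M q t := by
  unfold bevertonHolt
  positivity

theorem bevertonHolt_sub (hM : 0 < M) (hq : 0 ≤ q) {a b : ℝ} (ha : 0 ≤ a) (hb : 0 ≤ b) :
    bevertonHolt A M q a - bevertonHolt A M q b =
      A * M ^ 2 * (a - b) / ((M + q * a) * (M + q * b)) := by
  unfold bevertonHolt
  field_simp
  ring

theorem abs_bevertonHolt_sub_le_s9 (hA : 0 ≤ A) (hM : 0 < M) (hq : 0 ≤ q) {a b : ℝ} (ha : 0 ≤ a)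
    (hb : 0 ≤ b) : |bevertonHolt A M q a - bevertonHolt A M q b| ≤ A * |a - b| := by
  have hMa : M ≤ M + q * a := le_add_of_nonneg_right (by positivity)
  have hMb : M ≤ M + q * b := le_add_of_nonneg_right (by positivity)
  rw [bevertonHolt_sub hM hq ha hb, abs_div, abs_mul,
    abs_of_nonneg (by positivity : 0 ≤ A * M ^ 2),
    abs_of_pos (by positivity : 0 < (M + q * a) * (M + q * b)), div_le_iff₀ (by positivity)]
  calc A * M ^ 2 * |a - b| = A * |a - b| * (M * M) := by ring
    _ ≤ A * |a - b| * ((M + q * a) * (M + q * b)) := by gcongr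

theorem growthMap_nonneg {a b : ℝ} (ha : 0 ≤ a) (hb : 0 ≤ b) (hA : 0 ≤ A) (hM : 0 < M)
    (hq : 0 ≤ q) (t : ℝ) : 0 ≤ growthMap a b A M q t :=
  add_nonneg (mul_nonneg ha (le_max_right t 0))
    (mul_nonneg hb (bevertonHolt_nonneg hA hM hq (le_max_right t 0)))

theorem lipschitzWith_growthMap {a b : ℝ} (ha : 0 ≤ a) (hb : 0 ≤ b) (hA : 0 ≤ A) (hM : 0 < M)
    (hq : 0 ≤ q) : LipschitzWith (a + b * A).toNNReal (growthMap a b A M q) := by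
  have hOn : LipschitzOnWith (a + b * A).toNNReal
      (fun t => a * t + b * bevertonHolt A M q t) (Set.Ici 0) := by
    refine LipschitzOnWith.of_dist_le_mul fun x hx y hy => ?_
    rw [Real.coe_toNNReal _ (by positivity), Real.dist_eq, Real.dist_eq]
    calc |a * x + b * bevertonHolt A M q x - (a * y + b * bevertonHolt A M q y)|
        = |a * (x - y) + b * (bevertonHolt A M q x - bevertonHolt A M q y)| := by ring_nf
      _ ≤ a * |x - y| + b * |bevertonHolt A M q x - bevertonHolt A M q y| := by
        refine (abs_add_le _ _).trans_eq ?_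
        rw [abs_mul, abs_mul, abs_of_nonneg ha, abs_of_nonneg hb]
      _ ≤ a * |x - y| + b * (A * |x - y|) := by
        gcongr
        exact abs_bevertonHolt_sub_le_s9 hA hM hq hx hy
      _ = (a + b * A) * |x - y| := by ring
  have hmax : LipschitzOnWith 1 (fun t : ℝ => max t 0) Set.univ :=
    (LipschitzWith.id.max_const 0).lipschitzOnWith
  have h := lipschitzOnWith_univ.1 (hOn.comp hmax fun t _ => le_max_right t 0)
  rw [mul_one] at h
  exact h

end BevertonHolt

theorem stmt9_general
    (r M k s : ℝ) (hr : 1 < r) (hM : 0 < M) (hk : 0 < k) (hs : 0 ≤ s)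
    (F : ℝ → ℝ) (hF : ∀ u : ℝ, F u = k * r * M * u / (M + (r - 1) * u))
    (pA pJ : ℝ) (hpA : pA ∈ Set.Icc (0:ℝ) 1) (hpJ : pJ ∈ Set.Icc (0:ℝ) 1)
    (c : ℝ)
    (Bc : (ℝ → ℝ) → ℝ → ℝ)
    (hBc : ∀ (u : ℝ → ℝ) (x : ℝ), Bc u x =
      s * (1 - pA) * u (x + c) + (1 - pJ) * F (u (x + c)))
    (hb2 : s * (1 - pA) + (1 - pJ) * k * r < 1)
    (w : ℝ → ℝ) (hwm : Measurable w) (hwnn : ∀ x, 0 ≤ w x) (hwb : ∃ C : ℝ, ∀ x, w x ≤ C) :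
    ∃ u : ℝ → ℝ,
      (Measurable u ∧ (∀ x, 0 ≤ u x) ∧ (∃ C : ℝ, ∀ x, u x ≤ C) ∧
        ∀ x, u x - Bc u x = w x) ∧
      (∀ v : ℝ → ℝ,
        (Measurable v ∧ (∀ x, 0 ≤ v x) ∧ (∃ C : ℝ, ∀ x, v x ≤ C) ∧
          ∀ x, v x - Bc v x = w x) → v = u) ∧
      (Continuous w → Continuous u) := by
  obtain ⟨C, hwC⟩ := hwb
  have hA : 0 ≤ k * r := by positivity
  have hq : 0 ≤ r - 1 := by linarith
  have ha : 0 ≤ s * (1 - pA) := mul_nonneg hs (sub_nonneg.2 hpA.2)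
  have hb : 0 ≤ 1 - pJ := sub_nonneg.2 hpJ.2
  have hg := lipschitzWith_growthMap ha hb hA hM hq
  have hK : (s * (1 - pA) + (1 - pJ) * (k * r)).toNNReal < 1 :=
    Real.toNNReal_lt_one.2 (by linarith [mul_assoc (1 - pJ) k r])
  have hBc_eq : ∀ v : ℝ → ℝ, (∀ x, 0 ≤ v x) → ∀ x,
      Bc v x = growthMap (s * (1 - pA)) (1 - pJ) (k * r) M (r - 1) (v (x + c)) := by
    intro v hv x
    rw [hBc, hF, growthMap, max_eq_left (hv _)]
    rfl
  let W : ℓ^∞(ℝ, ℝ) := ⟨w, memℓp_infty_of_nonneg_of_le hwnn hwC⟩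
  set u := lp.boundedSolution hg hK (· + c) W
  have hu_eq := lp.boundedSolution_apply hg hK (· + c) W
  have hu_nonneg : ∀ x, 0 ≤ u x := fun x =>
    hu_eq x ▸ add_nonneg (growthMap_nonneg ha hb hA hM hq _) (hwnn x)
  refine ⟨u, ⟨lp.measurable_boundedSolution hg hK _ W (measurable_add_const c) hwm, hu_nonneg,
    ⟨‖u‖, fun x => (le_abs_self _).trans (lp.norm_apply_le_norm ENNReal.top_ne_zero u x)⟩,
    fun x => by linarith [hu_eq x, hBc_eq u hu_nonneg x]⟩, ?_,
    fun hw => lp.continuous_boundedSolution hg hK _ W (continuous_add_const c) hw⟩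
  rintro v ⟨-, hv_nonneg, ⟨Cv, hvC⟩, hv_eq⟩
  let V : ℓ^∞(ℝ, ℝ) := ⟨v, memℓp_infty_of_nonneg_of_le hv_nonneg hvC⟩
  exact congrArg (⇑) (lp.eq_boundedSolution hg hK (· + c) W (v := V)
    fun x => by linarith [hv_eq x, hBc_eq v hv_nonneg x])

theorem stmt9
    (r M k s : ℝ) (hr : 1 < r) (hM : 0 < M) (hk : 0 < k) (hs : 0 ≤ s) (hsk : s + k = 1)
    (F : ℝ → ℝ) (hF : ∀ u : ℝ, F u = k * r * M * u / (M + (r - 1) * u))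
    (pA pJ : ℝ) (hpA : pA ∈ Set.Icc (0:ℝ) 1) (hpJ : pJ ∈ Set.Icc (0:ℝ) 1)
    (c : ℝ)
    (Bc : (ℝ → ℝ) → ℝ → ℝ)
    (hBc : ∀ (u : ℝ → ℝ) (x : ℝ), Bc u x =
      s * (1 - pA) * u (x + c) + (1 - pJ) * F (u (x + c)))
    (hb2 : s * (1 - pA) + (1 - pJ) * k * r < 1)
    (w : ℝ → ℝ) (hwm : Measurable w) (hwnn : ∀ x, 0 ≤ w x) (hwb : ∃ C : ℝ, ∀ x, w x ≤ C) :
    ∃ u : ℝ → ℝ,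
      (Measurable u ∧ (∀ x, 0 ≤ u x) ∧ (∃ C : ℝ, ∀ x, u x ≤ C) ∧
        ∀ x, u x - Bc u x = w x) ∧
      (∀ v : ℝ → ℝ,
        (Measurable v ∧ (∀ x, 0 ≤ v x) ∧ (∃ C : ℝ, ∀ x, v x ≤ C) ∧
          ∀ x, v x - Bc v x = w x) → v = u) ∧
      (Continuous w → Continuous u) :=
  stmt9_general r M k s hr hM hk hs F hF pA pJ hpA hpJ c Bc hBc hb2 w hwm hwnn hwb
end
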